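/- Let 𝒮 be an octahedral split system on X with underlying partition X = X₁ ∪̇ ... ∪̇ X₆. Then every pair of distinct splits in 𝒮 is incompatible, and 𝒮 is weakly compatible. -/
import Mathlib


variable {X : Type*}
variable {X : Type*}

/-- `S` is a split of `X`: an unordered pair `{A, Aᶜ}` of nonempty complementary parts. -/
def IsSplit (S : Set (Set X)) : Prop :=
  ∃ A : Set X, A.Nonempty ∧ Aᶜ.Nonempty ∧ S = {A, Aᶜ}

/-- Two splits are compatible if some part of one and some part of the other cover `X`. -/
def Compatible (S T : Set (Set X)) : Prop :=
  ∃ A ∈ S, ∃ B ∈ T, A ∪ B = Set.univ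

/-- `x` and `y` lie in the same part of the split `S`, i.e. `S(x) = S(y)`. -/
def SameSide (S : Set (Set X)) (x y : X) : Prop :=
  ∀ A ∈ S, (x ∈ A ↔ y ∈ A)

/-- A split system is weakly compatible if there are no three splits `S₁, S₂, S₃` and
four elements `x₀, x₁, x₂, x₃` with `S_j(x_i) = S_j(x₀)` iff `i = j`. -/
def WeaklyCompatible (𝒮 : Set (Set (Set X))) : Prop :=
  ¬ ∃ (S : Fin 3 → Set (Set X)) (x : Fin 4 → X),
      (∀ j, S j ∈ 𝒮) ∧ ∀ i j : Fin 3, (SameSide (S j) (x i.succ) (x 0) ↔ i = j)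

/-- A split system is octahedral if it arises from a partition `X = X₁ ∪̇ ... ∪̇ X₆`
as `S_i = X_i ∪ X_{i+1} ∪ X_{i+2} | X_{i+3} ∪ X_{i+4} ∪ X_{i+5}` (`i = 1, 2, 3`,
indices mod 6) together with `S₄ = X₁ ∪ X₃ ∪ X₅ | X₂ ∪ X₄ ∪ X₆`. -/
def IsOctahedral (𝒮 : Set (Set (Set X))) : Prop :=
  ∃ Y : ℕ → Set X,
    (∀ i < 6, (Y i).Nonempty) ∧
    (∀ i < 6, ∀ j < 6, i ≠ j → Y i ∩ Y j = ∅) ∧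
    (⋃ i ∈ Finset.range 6, Y i) = Set.univ ∧
    𝒮 = {T | (∃ i < 3, T = {Y i ∪ Y (i+1) ∪ Y (i+2),
                            Y ((i+3) % 6) ∪ Y ((i+4) % 6) ∪ Y ((i+5) % 6)}) ∨
             T = {Y 0 ∪ Y 2 ∪ Y 4, Y 1 ∪ Y 3 ∪ Y 5}}

/-- Auxiliary: the four octahedral splits as Boolean functions on `Fin 6`. -/
def tri (p : Fin 4) (i : Fin 6) : Bool :=
  match p with
  | 0 => decide (i.val < 3)
  | 1 => decide (1 ≤ i.val ∧ i.val ≤ 3)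
  | 2 => decide (2 ≤ i.val ∧ i.val ≤ 4)
  | 3 => decide (i.val % 2 = 0)

lemma tri_model1 : ∀ p q : Fin 4, p ≠ q → ∀ b1 b2 : Bool,
    ∃ i : Fin 6, tri p i ≠ b1 ∧ tri q i ≠ b2 := by decide

set_option maxHeartbeats 4000000 in
lemma tri_model2 : ∀ (p0 p1 p2 : Fin 4) (c0 c1 c2 c3 : Fin 6),
    ¬ ((tri p0 c1 = tri p0 c0) ∧ (tri p1 c1 ≠ tri p1 c0) ∧ (tri p2 c1 ≠ tri p2 c0) ∧
       (tri p0 c2 ≠ tri p0 c0) ∧ (tri p1 c2 = tri p1 c0) ∧ (tri p2 c2 ≠ tri p2 c0) ∧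
       (tri p0 c3 ≠ tri p0 c0) ∧ (tri p1 c3 ≠ tri p1 c0) ∧ (tri p2 c3 = tri p2 c0)) := by
  decide

/-- an octahedral split system is pairwise incompatible and
weakly compatible. -/
theorem stmt13 [Fintype X] (𝒮 : Set (Set (Set X))) (hoct : IsOctahedral 𝒮) :
    (∀ S ∈ 𝒮, ∀ T ∈ 𝒮, S ≠ T → ¬ Compatible S T) ∧ WeaklyCompatible 𝒮 := by
  classical
  obtain ⟨Y, hne, hdisj, hcov, h𝒮⟩ := hoct
  -- every point gets a label in Fin 6
  have hc' : ∀ x : X, ∃ i : Fin 6, x ∈ Y i := by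
    intro x
    have hx : x ∈ ⋃ i ∈ Finset.range 6, Y i := by rw [hcov]; exact Set.mem_univ x
    simp only [Set.mem_iUnion, Finset.mem_range] at hx
    obtain ⟨i, hi, hxi⟩ := hx
    exact ⟨⟨i, hi⟩, hxi⟩
  choose c hcY using hc'
  have key : ∀ (x : X) (i : ℕ), i < 6 → (x ∈ Y i ↔ (c x : ℕ) = i) := by
    intro x i hi
    constructor
    · intro hx
      by_contra hne'
      have hij : (i : ℕ) ≠ (c x : ℕ) := fun h => hne' h.symm
      have hd := hdisj i hi (c x) (c x).isLt hij
      have : x ∈ Y i ∩ Y (c x) := ⟨hx, hcY x⟩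
      rw [hd] at this
      exact this
    · intro h
      exact h ▸ hcY x
  -- P p b := {x | tri p (c x) = b}
  have hU : ∀ (p : Fin 4) (b : Bool) (a a' a'' : ℕ), a < 6 → a' < 6 → a'' < 6 →
      (∀ v : Fin 6, tri p v = b ↔ ((v : ℕ) = a ∨ (v : ℕ) = a' ∨ (v : ℕ) = a'')) →
      Y a ∪ Y a' ∪ Y a'' = {x | tri p (c x) = b} := by
    intro p b a a' a'' ha ha' ha'' hv
    ext x
    simp only [Set.mem_union, Set.mem_setOf_eq, key x a ha, key x a' ha', key x a'' ha'',
      hv (c x)]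
    tauto
  have hrep : ∀ S ∈ 𝒮, ∃ p : Fin 4,
      S = {{x | tri p (c x) = true}, {x | tri p (c x) = false}} := by
    intro S hS
    rw [h𝒮] at hS
    rcases hS with ⟨i, hi3, hSe⟩ | hSe
    · interval_cases i
      · refine ⟨0, ?_⟩
        norm_num at hSe
        rw [hSe, hU 0 true 0 1 2 (by norm_num) (by norm_num) (by norm_num) (by decide),
          hU 0 false 3 4 5 (by norm_num) (by norm_num) (by norm_num) (by decide)]
      · refine ⟨1, ?_⟩
        norm_num at hSe
        rw [hSe, hU 1 true 1 2 3 (by norm_num) (by norm_num) (by norm_num) (by decide),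
          hU 1 false 4 5 0 (by norm_num) (by norm_num) (by norm_num) (by decide)]
      · refine ⟨2, ?_⟩
        norm_num at hSe
        rw [hSe, hU 2 true 2 3 4 (by norm_num) (by norm_num) (by norm_num) (by decide),
          hU 2 false 5 0 1 (by norm_num) (by norm_num) (by norm_num) (by decide)]
    · refine ⟨3, ?_⟩
      rw [hSe, hU 3 true 0 2 4 (by norm_num) (by norm_num) (by norm_num) (by decide),
        hU 3 false 1 3 5 (by norm_num) (by norm_num) (by norm_num) (by decide)]
  constructor
  · -- pairwise incompatible
    intro S hS T hT hST ⟨A, hA, B, hB, hAB⟩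
    obtain ⟨p, hp⟩ := hrep S hS
    obtain ⟨q, hq⟩ := hrep T hT
    have hpq : p ≠ q := by rintro rfl; exact hST (hp.trans hq.symm)
    rw [hp] at hA; rw [hq] at hB
    have hA' : ∃ b : Bool, A = {x | tri p (c x) = b} := by
      rcases hA with h | h
      · exact ⟨true, h⟩
      · exact ⟨false, h⟩
    have hB' : ∃ b : Bool, B = {x | tri q (c x) = b} := by
      rcases hB with h | h
      · exact ⟨true, h⟩
      · exact ⟨false, h⟩
    obtain ⟨b1, rfl⟩ := hA'
    obtain ⟨b2, rfl⟩ := hB'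
    obtain ⟨i, hi1, hi2⟩ := tri_model1 p q hpq b1 b2
    obtain ⟨y, hy⟩ := hne i i.isLt
    have hcy : c y = i := Fin.ext ((key y i i.isLt).mp hy)
    have : y ∈ ({x | tri p (c x) = b1} ∪ {x | tri q (c x) = b2} : Set X) := by
      rw [hAB]; exact Set.mem_univ y
    rcases this with h | h
    · exact hi1 (hcy ▸ h)
    · exact hi2 (hcy ▸ h)
  · -- weakly compatible
    rintro ⟨S, xx, hSmem, hcond⟩
    have := fun j => hrep (S j) (hSmem j)
    choose p hp using this
    have hss : ∀ (j : Fin 3) (a b : X),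
        SameSide (S j) a b ↔ tri (p j) (c a) = tri (p j) (c b) := by
      intro j a b
      rw [hp j]
      constructor
      · intro h
        have h1 := h {x | tri (p j) (c x) = true} (Or.inl rfl)
        simp only [Set.mem_setOf_eq] at h1
        cases hb1 : tri (p j) (c a) <;> cases hb2 : tri (p j) (c b) <;> simp_all
      · intro h A hA
        rcases hA with rfl | rfl
        · simp only [Set.mem_setOf_eq, h]
        · simp only [Set.mem_setOf_eq, h]
    have hc2 : ∀ i j : Fin 3,
        (tri (p j) (c (xx i.succ)) = tri (p j) (c (xx 0)) ↔ i = j) := by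
      intro i j
      rw [← hss]
      exact hcond i j
    refine tri_model2 (p 0) (p 1) (p 2) (c (xx 0)) (c (xx 1)) (c (xx 2)) (c (xx 3))
      ⟨(hc2 0 0).mpr rfl, ?_, ?_, ?_, (hc2 1 1).mpr rfl, ?_, ?_, ?_, (hc2 2 2).mpr rfl⟩
    · exact fun h => absurd ((hc2 0 1).mp h) (by decide)
    · exact fun h => absurd ((hc2 0 2).mp h) (by decide)
    · exact fun h => absurd ((hc2 1 0).mp h) (by decide)
    · exact fun h => absurd ((hc2 1 2).mp h) (by decide)
    · exact fun h => absurd ((hc2 2 0).mp h) (by decide)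
    · exact fun h => absurd ((hc2 2 1).mp h) (by decide)
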